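/- Let A, B ∈ ℤ[x] be coprime in ℚ[x] with resultant Δ, and G(n) = gcd(A(n), B(n)). Then the sequence (G(n))_{n∈ℤ} is periodic with period dividing Δ, i.e., G(n + Δ) = G(n) for all integers n. -/

import Mathlib

open Polynomial

/-- The Sylvester matrix of two integer polynomials `A` and `B`, of size
`(d+e) × (d+e)` where `d = deg A`, `e = deg B`: the first `e` columns carry the
(shifted) coefficients of `A`, the last `d` columns those of `B`. -/
noncomputable def sylvesterMatrix (A B : Polynomial ℤ) :
    Matrix (Fin (A.natDegree + B.natDegree)) (Fin (A.natDegree + B.natDegree)) ℤ :=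
  Matrix.of fun i j =>
    if (j : ℕ) < B.natDegree then
      if (j : ℕ) ≤ (i : ℕ) ∧ (i : ℕ) ≤ (j : ℕ) + A.natDegree then
        A.coeff (A.natDegree + (j : ℕ) - (i : ℕ)) else 0
    else
      if (j : ℕ) - B.natDegree ≤ (i : ℕ) ∧ (i : ℕ) ≤ (j : ℕ) then
        B.coeff ((j : ℕ) - (i : ℕ)) else 0

/-- The resultant of two integer polynomials, as the determinant of their Sylvester matrix. -/
noncomputable def resultant (A B : Polynomial ℤ) : ℤ := (sylvesterMatrix A B).det

/-!
The adjugate of the Sylvester matrix gives `A p + B q = Δ` in `ℤ[X]`, so `G(m) ∣ Δ` for every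
integer `m`. Since `G(m) ∣ m' - m` forces `G(m) ∣ A(m')` and `G(m) ∣ B(m')`, this yields
`G(n) ∣ G(n + Δ)` and `G(n + Δ) ∣ G(n)`.
-/

theorem sylvesterMatrix_eq_submatrix_rev (A B : ℤ[X]) :
    sylvesterMatrix A B =
      (sylvester A B A.natDegree B.natDegree).submatrix Fin.rev Fin.rev := by
  ext i j
  simp only [sylvesterMatrix, sylvester, Matrix.of_apply, Matrix.submatrix_apply, Fin.addCases,
    Fin.val_rev, Set.mem_Icc]
  split_ifs <;> simp_all <;> first | omega | (congr 1; omega)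

theorem resultant_eq_polynomial_resultant (A B : ℤ[X]) :
    _root_.resultant A B = Polynomial.resultant A B := by
  rw [_root_.resultant, sylvesterMatrix_eq_submatrix_rev]
  exact Matrix.det_submatrix_equiv_self Fin.revPerm _

namespace Polynomial

theorem dvd_resultant_of_dvd_eval {R : Type*} [CommRing R] {f g : R[X]} {x d : R}
    (hdeg : f.natDegree ≠ 0 ∨ g.natDegree ≠ 0) (hf : d ∣ f.eval x) (hg : d ∣ g.eval x) :
    d ∣ f.resultant g := by
  obtain ⟨p, q, -, -, hpq⟩ := exists_mul_add_mul_eq_C_resultant f g le_rfl le_rfl hdeg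
  have hx := congrArg (eval x) hpq
  rw [eval_C, eval_add, eval_mul, eval_mul] at hx
  exact hx ▸ dvd_add (hf.mul_right _) (hg.mul_right _)

theorem dvd_eval_of_dvd_sub {R : Type*} [CommRing R] (p : R[X]) {a b d : R}
    (ha : d ∣ p.eval a) (hab : d ∣ b - a) : d ∣ p.eval b := by
  simpa using dvd_add (hab.trans (sub_dvd_eval_sub b a p)) ha

theorem gcd_eval_dvd_gcd_eval_of_dvd_sub (P Q : ℤ[X]) {a b : ℤ}
    (hab : (Int.gcd (P.eval a) (Q.eval a) : ℤ) ∣ b - a) :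
    Int.gcd (P.eval a) (Q.eval a) ∣ Int.gcd (P.eval b) (Q.eval b) :=
  Int.natCast_dvd_natCast.mp <| Int.dvd_coe_gcd
    (P.dvd_eval_of_dvd_sub (Int.gcd_dvd_left _ _) hab)
    (Q.dvd_eval_of_dvd_sub (Int.gcd_dvd_right _ _) hab)

theorem gcd_eval_add_eq_of_forall_gcd_eval_dvd (P Q : ℤ[X]) {D : ℤ}
    (hD : ∀ m, (Int.gcd (P.eval m) (Q.eval m) : ℤ) ∣ D) (n : ℤ) :
    Int.gcd (P.eval (n + D)) (Q.eval (n + D)) = Int.gcd (P.eval n) (Q.eval n) :=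
  Nat.dvd_antisymm
    (gcd_eval_dvd_gcd_eval_of_dvd_sub P Q (by simpa using (hD (n + D)).neg_right))
    (gcd_eval_dvd_gcd_eval_of_dvd_sub P Q (by simpa using hD n))

end Polynomial

theorem gcd_eval_periodic_resultant_general (A B : Polynomial ℤ) :
    ∀ n : ℤ, Int.gcd (A.eval (n + _root_.resultant A B)) (B.eval (n + _root_.resultant A B)) =
      Int.gcd (A.eval n) (B.eval n) := by
  by_cases hconst : A.natDegree = 0 ∧ B.natDegree = 0
  · rw [eq_C_of_natDegree_eq_zero hconst.1, eq_C_of_natDegree_eq_zero hconst.2]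
    simp
  · have hdeg : A.natDegree ≠ 0 ∨ B.natDegree ≠ 0 := not_and_or.mp hconst
    rw [resultant_eq_polynomial_resultant]
    exact gcd_eval_add_eq_of_forall_gcd_eval_dvd A B fun _ =>
      dvd_resultant_of_dvd_eval hdeg (Int.gcd_dvd_left _ _) (Int.gcd_dvd_right _ _)

theorem gcd_eval_periodic_resultant (A B : Polynomial ℤ)
    (hcop : IsCoprime (A.map (Int.castRingHom ℚ)) (B.map (Int.castRingHom ℚ))) :
    ∀ n : ℤ, Int.gcd (A.eval (n + _root_.resultant A B)) (B.eval (n + _root_.resultant A B)) =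
      Int.gcd (A.eval n) (B.eval n) :=
  gcd_eval_periodic_resultant_general A B
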